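/- Lippmann–Schwinger identity for the boundary value from above: for every real k ≠ 0 and every x ∈ ℝ, the integral ∫_ℝ e^{i|k|·|x−y|}·sech²(m y)·E_k(y) dy converges absolutely and E_k(x) − (3·i·m²/|k|)·∫_ℝ e^{i|k|·|x−y|}·sech²(m y)·E_k(y) dy = e^{ikx}. -/

import Mathlib

open MeasureTheory

noncomputable def sech (x : ℝ) : ℝ := 1 / Real.cosh x

noncomputable def cNorm (m k : ℝ) : ℂ :=
  if 0 ≤ k then -(k : ℂ) ^ 2 - 3 * Complex.I * (m : ℂ) * (k : ℂ) + 2 * (m : ℂ) ^ 2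
  else -(k : ℂ) ^ 2 + 3 * Complex.I * (m : ℂ) * (k : ℂ) + 2 * (m : ℂ) ^ 2

noncomputable def genEig (m k : ℝ) (x : ℝ) : ℂ :=
  cNorm m k *
    (-(k : ℂ) ^ 2 - 3 * Complex.I * (m : ℂ) * (k : ℂ) * (Real.tanh (m * x) : ℂ)
      + 2 * (m : ℂ) ^ 2 - 3 * (m : ℂ) ^ 2 * (sech (m * x) : ℂ) ^ 2) *
    Complex.exp (Complex.I * (k : ℂ) * (x : ℂ)) /
    (((k : ℂ) ^ 2 + (m : ℂ) ^ 2) * ((k : ℂ) ^ 2 + 4 * (m : ℂ) ^ 2))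

section Aux
open Filter Set Topology

lemma I_sq' : Complex.I ^ 2 = -1 := Complex.I_sq
lemma I_cube : Complex.I ^ 3 = -Complex.I := by
  rw [pow_succ, Complex.I_sq]; ring
lemma I_four : Complex.I ^ 4 = 1 := by
  rw [pow_succ, I_cube]; simp [Complex.I_mul_I]
lemma I_five : Complex.I ^ 5 = Complex.I := by
  rw [pow_succ, I_four]; ring
lemma I_six : Complex.I ^ 6 = -1 := by
  rw [pow_succ, I_five, Complex.I_mul_I]

lemma sech_sq_eq (x : ℝ) : sech x ^ 2 = 1 - Real.tanh x ^ 2 := by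
  have h := Real.cosh_sq_sub_sinh_sq x
  have hc := Real.cosh_pos x
  rw [sech, Real.tanh_eq_sinh_div_cosh]
  field_simp
  linarith

lemma tanh_sq_le_one (x : ℝ) : Real.tanh x ^ 2 ≤ 1 := by
  nlinarith [sech_sq_eq x, sq_nonneg (sech x)]

/-- the complexified tanh -/
noncomputable def tc (m y : ℝ) : ℂ := ((Real.tanh (m * y) : ℝ) : ℂ)

lemma sech_sq_eq' (m y : ℝ) : ((sech (m*y) : ℝ) : ℂ)^2 = 1 - tc m y ^ 2 := by
  rw [show ((sech (m*y):ℝ):ℂ)^2 = ((sech (m*y)^2 : ℝ):ℂ) by push_cast; ring,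
    sech_sq_eq]
  unfold tc; push_cast; ring

noncomputable def Pfun (m k : ℝ) (y : ℝ) : ℂ :=
  -(k:ℂ)^2 - 3*Complex.I*(m:ℂ)*(k:ℂ)*tc m y + 2*(m:ℂ)^2 - 3*(m:ℂ)^2*(1 - tc m y^2)

noncomputable def gpol (m k : ℝ) (t : ℂ) : ℂ :=
  (m:ℂ)⁻¹ * ((-(k:ℂ)^2 - (m:ℂ)^2) * t - (3*Complex.I*(m:ℂ)*(k:ℂ)/2) * (t*t) + (m:ℂ)^2 * (t*t*t))

noncomputable def Gfun (m k : ℝ) (y : ℝ) : ℂ := gpol m k (tc m y)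

noncomputable def Ffun (m k : ℝ) (y : ℝ) : ℂ :=
  Complex.exp (2*Complex.I*(k:ℂ)*(y:ℂ)) *
    ((1 - tc m y * tc m y) * (Complex.I*(k:ℂ)/2 - (m:ℂ)*tc m y))

lemma hasDerivAt_tanh (x : ℝ) : HasDerivAt Real.tanh (1 - Real.tanh x ^ 2) x := by
  have h := (Real.hasDerivAt_sinh x).div (Real.hasDerivAt_cosh x) (Real.cosh_pos x).ne'
  have heq : (Real.sinh / Real.cosh) = Real.tanh :=
    funext fun y => (Real.tanh_eq_sinh_div_cosh y).symm
  rw [heq] at h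
  refine h.congr_deriv ?_
  rw [Real.tanh_eq_sinh_div_cosh]
  have hc := (Real.cosh_pos x).ne'
  field_simp

lemma hasDerivAt_tanh_mul (m y : ℝ) :
    HasDerivAt (fun z : ℝ => Real.tanh (m*z)) ((1 - Real.tanh (m*y)^2) * m) y := by
  have h := (hasDerivAt_tanh (m*y)).comp y ((hasDerivAt_id y).const_mul m)
  simpa [Function.comp_def] using h

lemma hasDerivAt_tc (m y : ℝ) :
    HasDerivAt (tc m) ((m:ℂ) * (1 - tc m y^2)) y := by
  have h := (hasDerivAt_tanh_mul m y).ofReal_comp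
  refine h.congr_deriv ?_
  unfold tc; push_cast; ring

lemma hasDerivAt_Gfun (m k : ℝ) (hm : m ≠ 0) (y : ℝ) :
    HasDerivAt (Gfun m k) ((1 - tc m y^2) * Pfun m k y) y := by
  have hT : HasDerivAt (fun z => tc m z) ((m:ℂ) * (1 - tc m y^2)) y := hasDerivAt_tc m y
  have h := (((hT.const_mul ((-(k:ℂ)^2 - (m:ℂ)^2))).sub
      ((hT.mul hT).const_mul (3*Complex.I*(m:ℂ)*(k:ℂ)/2))).add
      (((hT.mul hT).mul hT).const_mul ((m:ℂ)^2))).const_mul ((m:ℂ)⁻¹)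
  have hm' : (m:ℂ) ≠ 0 := Complex.ofReal_ne_zero.2 hm
  unfold Gfun gpol
  refine h.congr_deriv ?_
  simp only [Pi.mul_apply]
  unfold Pfun
  push_cast
  field_simp
  ring

lemma hasDerivAt_Ffun (m k : ℝ) (y : ℝ) :
    HasDerivAt (Ffun m k)
      (Complex.exp (2*Complex.I*(k:ℂ)*(y:ℂ)) * ((1 - tc m y^2) * Pfun m k y)) y := by
  have hT : HasDerivAt (fun z => tc m z) ((m:ℂ) * (1 - tc m y^2)) y := hasDerivAt_tc m y
  have harg : HasDerivAt (fun z : ℝ => 2*Complex.I*(k:ℂ)*(z:ℂ))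
      (2*Complex.I*(k:ℂ)) y := by
    have h0 : HasDerivAt (fun z : ℝ => ((z:ℝ):ℂ)) 1 y := (hasDerivAt_id y).ofReal_comp
    have := h0.const_mul (2*Complex.I*(k:ℂ))
    simpa using this
  have hE := harg.cexp
  have hp1 := (hT.mul hT).const_sub (1:ℂ)
  have hp2 := (hT.const_mul ((m:ℂ))).const_sub (Complex.I*(k:ℂ)/2)
  have h := hE.mul (hp1.mul hp2)
  unfold Ffun
  refine h.congr_deriv ?_
  simp only [Pi.mul_apply]
  unfold Pfun
  push_cast
  ring_nf
  simp only [I_sq', I_cube, I_four, I_five, I_six]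
  ring

lemma tendsto_tanh_atTop : Tendsto Real.tanh atTop (𝓝 1) := by
  have heq : ∀ x : ℝ, Real.tanh x = (1 - Real.exp (-2*x)) / (1 + Real.exp (-2*x)) := by
    intro x
    rw [Real.tanh_eq_sinh_div_cosh, Real.sinh_eq, Real.cosh_eq]
    have h1 : Real.exp x > 0 := Real.exp_pos x
    have h2 : Real.exp (-x) > 0 := Real.exp_pos _
    rw [div_eq_div_iff (by positivity) (by positivity)]
    have h3 : Real.exp x * Real.exp (-x) = 1 := by rw [← Real.exp_add]; simp
    have h4 : Real.exp (-2*x) = Real.exp (-x) * Real.exp (-x) := by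
      rw [← Real.exp_add]; ring_nf
    nlinarith
  have hexp : Tendsto (fun x : ℝ => Real.exp (-2*x)) atTop (𝓝 0) := by
    have h0 : Tendsto (fun x : ℝ => 2*x) atTop atTop :=
      tendsto_id.const_mul_atTop two_pos
    have := Real.tendsto_exp_neg_atTop_nhds_zero.comp h0
    refine this.congr fun z => ?_
    simp [Function.comp, neg_mul]
  have : Tendsto (fun x : ℝ => (1 - Real.exp (-2*x)) / (1 + Real.exp (-2*x))) atTop
      (𝓝 ((1 - 0)/(1 + 0))) :=
    ((tendsto_const_nhds.sub hexp).div (tendsto_const_nhds.add hexp) (by norm_num))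
  simp only [sub_zero, add_zero, div_one] at this
  exact this.congr fun x => (heq x).symm

lemma tendsto_tanh_atBot : Tendsto Real.tanh atBot (𝓝 (-1)) := by
  have := (tendsto_tanh_atTop.comp tendsto_neg_atBot_atTop).neg
  simp only [Function.comp] at this
  refine this.congr fun x => ?_
  rw [Real.tanh_neg]; ring

lemma tendsto_tc_atTop {m : ℝ} (hm : 0 < m) : Tendsto (tc m) atTop (𝓝 1) := by
  have h1 : Tendsto (fun y : ℝ => Real.tanh (m*y)) atTop (𝓝 1) :=
    tendsto_tanh_atTop.comp (tendsto_id.const_mul_atTop hm)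
  have := (Complex.continuous_ofReal.tendsto 1).comp h1
  rw [Complex.ofReal_one] at this
  exact this

lemma tendsto_tc_atBot {m : ℝ} (hm : 0 < m) : Tendsto (tc m) atBot (𝓝 (-1)) := by
  have h1 : Tendsto (fun y : ℝ => Real.tanh (m*y)) atBot (𝓝 (-1)) :=
    tendsto_tanh_atBot.comp (tendsto_id.const_mul_atBot hm)
  have := (Complex.continuous_ofReal.tendsto (-1)).comp h1
  rw [Complex.ofReal_neg, Complex.ofReal_one] at this
  exact this

lemma continuous_gpol (m k : ℝ) : Continuous (gpol m k) := by
  unfold gpol; fun_prop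

lemma tendsto_Gfun_atTop {m : ℝ} (k : ℝ) (hm : 0 < m) :
    Tendsto (Gfun m k) atTop (𝓝 (gpol m k 1)) :=
  ((continuous_gpol m k).tendsto 1).comp (tendsto_tc_atTop hm)

lemma tendsto_Gfun_atBot {m : ℝ} (k : ℝ) (hm : 0 < m) :
    Tendsto (Gfun m k) atBot (𝓝 (gpol m k (-1))) :=
  ((continuous_gpol m k).tendsto (-1)).comp (tendsto_tc_atBot hm)

lemma norm_exp_I_mul_real (a b : ℝ) : ‖Complex.exp (Complex.I * (a:ℂ) * (b:ℂ))‖ = 1 := by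
  rw [Complex.norm_exp]
  simp [Complex.mul_re, Complex.mul_im]

lemma norm_Ffun_le (m k y : ℝ) :
    ‖Ffun m k y‖ ≤ (1 - Real.tanh (m*y)^2) * (|k|/2 + |m|) := by
  unfold Ffun
  rw [norm_mul, norm_mul]
  have h1 : ‖Complex.exp (2*Complex.I*(k:ℂ)*(y:ℂ))‖ = 1 := by
    rw [show (2*Complex.I*(k:ℂ)*(y:ℂ)) = Complex.I * ((2*k : ℝ):ℂ) * ((y:ℝ):ℂ) by
      push_cast; ring]
    exact norm_exp_I_mul_real _ _
  have h2 : ‖1 - tc m y * tc m y‖ = 1 - Real.tanh (m*y)^2 := by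
    rw [show (1 : ℂ) - tc m y * tc m y = ((1 - Real.tanh (m*y)^2 : ℝ) : ℂ) by
      unfold tc; push_cast; ring]
    rw [Complex.norm_real, Real.norm_eq_abs]
    exact abs_of_nonneg (by nlinarith [tanh_sq_le_one (m*y)])
  have h3 : ‖Complex.I*(k:ℂ)/2 - (m:ℂ)*tc m y‖ ≤ |k|/2 + |m| := by
    refine le_trans (norm_sub_le _ _) ?_
    have e1 : ‖Complex.I*(k:ℂ)/2‖ = |k|/2 := by
      simp [norm_div, norm_mul, Complex.norm_real, Real.norm_eq_abs]
    have e2 : ‖(m:ℂ)*tc m y‖ ≤ |m| := by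
      unfold tc
      rw [norm_mul, Complex.norm_real, Complex.norm_real, Real.norm_eq_abs, Real.norm_eq_abs]
      have : |Real.tanh (m*y)| ≤ 1 := by
        nlinarith [tanh_sq_le_one (m*y), abs_nonneg (Real.tanh (m*y)),
          sq_abs (Real.tanh (m*y))]
      nlinarith [abs_nonneg m, abs_nonneg (Real.tanh (m*y))]
    linarith [e1.le, e2]
  calc ‖Complex.exp (2*Complex.I*(k:ℂ)*(y:ℂ))‖ * (‖1 - tc m y * tc m y‖ *
        ‖Complex.I*(k:ℂ)/2 - (m:ℂ)*tc m y‖)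
      = (1 - Real.tanh (m*y)^2) * ‖Complex.I*(k:ℂ)/2 - (m:ℂ)*tc m y‖ := by
        rw [h1, h2, one_mul]
    _ ≤ (1 - Real.tanh (m*y)^2) * (|k|/2 + |m|) := by
        apply mul_le_mul_of_nonneg_left h3
        nlinarith [tanh_sq_le_one (m*y)]

lemma tendsto_Ffun_atTop {m : ℝ} (k : ℝ) (hm : 0 < m) :
    Tendsto (Ffun m k) atTop (𝓝 0) := by
  apply squeeze_zero_norm (fun y => norm_Ffun_le m k y)
  have h1 : Tendsto (fun y : ℝ => Real.tanh (m*y)) atTop (𝓝 1) :=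
    tendsto_tanh_atTop.comp (tendsto_id.const_mul_atTop hm)
  have : Tendsto (fun y : ℝ => (1 - Real.tanh (m*y)^2) * (|k|/2 + |m|)) atTop
      (𝓝 ((1 - 1^2) * (|k|/2 + |m|))) :=
    ((tendsto_const_nhds.sub (h1.pow 2)).mul tendsto_const_nhds)
  simpa using this

lemma tendsto_Ffun_atBot {m : ℝ} (k : ℝ) (hm : 0 < m) :
    Tendsto (Ffun m k) atBot (𝓝 0) := by
  apply squeeze_zero_norm (fun y => norm_Ffun_le m k y)
  have h1 : Tendsto (fun y : ℝ => Real.tanh (m*y)) atBot (𝓝 (-1)) :=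
    tendsto_tanh_atBot.comp (tendsto_id.const_mul_atBot hm)
  have : Tendsto (fun y : ℝ => (1 - Real.tanh (m*y)^2) * (|k|/2 + |m|)) atBot
      (𝓝 ((1 - (-1)^2) * (|k|/2 + |m|))) :=
    ((tendsto_const_nhds.sub (h1.pow 2)).mul tendsto_const_nhds)
  simpa using this

lemma continuous_tanh : Continuous Real.tanh := by
  have heq : Real.tanh = (fun y => Real.sinh y / Real.cosh y) :=
    funext fun y => Real.tanh_eq_sinh_div_cosh y
  rw [heq]
  exact Real.continuous_sinh.div Real.continuous_cosh fun x => (Real.cosh_pos x).ne'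

lemma continuous_sech : Continuous sech :=
  continuous_const.div Real.continuous_cosh fun x => (Real.cosh_pos x).ne'

lemma integrable_sech_sq {m : ℝ} (hm : 0 < m) :
    Integrable (fun y : ℝ => sech (m*y)^2) := by
  have hderiv : ∀ y : ℝ, HasDerivAt (fun z : ℝ => Real.tanh (m*z) / m) (sech (m*y)^2) y := by
    intro y
    have h1 := (hasDerivAt_tanh_mul m y).div_const m
    refine h1.congr_deriv ?_
    rw [sech_sq_eq]
    field_simp
  have htop : Tendsto (fun z : ℝ => Real.tanh (m*z)/m) atTop (𝓝 (1/m)) := by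
    exact (tendsto_tanh_atTop.comp (tendsto_id.const_mul_atTop hm)).div_const m
  have hIoi : IntegrableOn (fun y : ℝ => sech (m*y)^2) (Ioi 0) :=
    integrableOn_Ioi_deriv_of_nonneg' (fun y _ => hderiv y)
      (fun y _ => by positivity) htop
  have hIci : IntegrableOn (fun y : ℝ => sech (m*y)^2) (Ici 0) :=
    (integrableOn_Ici_iff_integrableOn_Ioi).2 hIoi
  have hIic : IntegrableOn (fun y : ℝ => sech (m*y)^2) (Iic 0) := by
    have h2 := (MeasurePreserving.integrableOn_comp_preimage
      (Measure.measurePreserving_neg (volume : Measure ℝ))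
      (Homeomorph.neg ℝ).measurableEmbedding).2 hIci
    have heq : ((fun y : ℝ => sech (m*y)^2) ∘ (Neg.neg : ℝ → ℝ)) = fun y : ℝ => sech (m*y)^2 := by
      funext y
      simp [Function.comp, sech, mul_neg, Real.cosh_neg]
    rw [heq] at h2
    have hset : ((Neg.neg : ℝ → ℝ) ⁻¹' (Ici (0:ℝ))) = Iic 0 := by
      ext z; simp
    rwa [hset] at h2
  rw [← integrableOn_univ, ← Set.Iic_union_Ioi (a := (0:ℝ))]
  exact hIic.union hIoi

end Aux

set_option maxHeartbeats 4000000 in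
/-- Lippmann–Schwinger identity for the boundary value of the free resolvent from
above: for every real `k ≠ 0` and every `x`, the integral
`∫ e^{i|k||x−y|}·sech²(m y)·E_k(y) dy` converges absolutely and
`E_k(x) − (3im²/|k|)·∫ e^{i|k||x−y|}·sech²(m y)·E_k(y) dy = e^{ikx}`,
i.e. `(1 + R₀⁺(k²)V)E_k = e^{ikx}` with `V(x) = −6m²·sech²(m x)`. -/
theorem lippmann_schwinger_plus (m : ℝ) (hm : 0 < m) (k : ℝ) (hk : k ≠ 0) (x : ℝ) :
    Integrable (fun y : ℝ =>
      Complex.exp (Complex.I * (|k| : ℝ) * (|x - y| : ℝ)) *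
        (sech (m * y) : ℂ) ^ 2 * genEig m k y) ∧
    genEig m k x - (3 * Complex.I * (m : ℂ) ^ 2 / ((|k| : ℝ) : ℂ)) *
        ∫ y : ℝ, Complex.exp (Complex.I * (|k| : ℝ) * (|x - y| : ℝ)) *
          (sech (m * y) : ℂ) ^ 2 * genEig m k y
      = Complex.exp (Complex.I * (k : ℂ) * (x : ℂ)) := by
  have hm0 : m ≠ 0 := hm.ne'
  have hmC : (m:ℂ) ≠ 0 := Complex.ofReal_ne_zero.2 hm0
  have hkC : (k:ℂ) ≠ 0 := Complex.ofReal_ne_zero.2 hk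
  have hD1 : (k:ℂ)^2 + (m:ℂ)^2 ≠ 0 := by
    rw [show (k:ℂ)^2 + (m:ℂ)^2 = ((k^2 + m^2 : ℝ) : ℂ) by push_cast; ring]
    exact Complex.ofReal_ne_zero.2 (by positivity)
  have hD2 : (k:ℂ)^2 + 4*(m:ℂ)^2 ≠ 0 := by
    rw [show (k:ℂ)^2 + 4*(m:ℂ)^2 = ((k^2 + 4*m^2 : ℝ) : ℂ) by push_cast; ring]
    exact Complex.ofReal_ne_zero.2 (by positivity)
  set f : ℝ → ℂ := fun y : ℝ =>
      Complex.exp (Complex.I * (|k| : ℝ) * (|x - y| : ℝ)) *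
        (sech (m * y) : ℂ) ^ 2 * genEig m k y with hf
  -- continuity
  have ht : Continuous fun y : ℝ => ((Real.tanh (m*y):ℝ):ℂ) :=
    Complex.continuous_ofReal.comp (continuous_tanh.comp (continuous_const.mul continuous_id))
  have hs : Continuous fun y : ℝ => ((sech (m*y):ℝ):ℂ) :=
    Complex.continuous_ofReal.comp (continuous_sech.comp (continuous_const.mul continuous_id))
  have he : Continuous fun y : ℝ => Complex.exp (Complex.I*(k:ℂ)*(y:ℂ)) :=
    Complex.continuous_exp.comp (continuous_const.mul Complex.continuous_ofReal)
  have hgcont : Continuous (genEig m k) := by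
    unfold genEig
    exact ((continuous_const.mul
      (((continuous_const.sub (continuous_const.mul ht)).add continuous_const).sub
        (continuous_const.mul (hs.pow 2)))).mul he).div_const _
  have hcont : Continuous f := by
    rw [hf]
    refine Continuous.mul (Continuous.mul ?_ (hs.pow 2)) hgcont
    exact Complex.continuous_exp.comp
      (continuous_const.mul (Complex.continuous_ofReal.comp
        ((continuous_const.sub continuous_id).abs)))
  -- uniform bound on genEig
  set CE : ℝ := ‖cNorm m k‖ * (k^2 + 3*(|m| * |k|) + 2*m^2 + 3*m^2) /
      ‖((k:ℂ)^2 + (m:ℂ)^2) * ((k:ℂ)^2 + 4*(m:ℂ)^2)‖ with hCE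
  have hEigB : ∀ y : ℝ, ‖genEig m k y‖ ≤ CE := by
    intro y
    unfold genEig
    rw [norm_div, norm_mul, norm_mul, norm_exp_I_mul_real, mul_one, hCE]
    rw [div_le_div_iff_of_pos_right (norm_pos_iff.2 (mul_ne_zero hD1 hD2))]
    refine mul_le_mul_of_nonneg_left ?_ (norm_nonneg _)
    have h1 : ‖-(k:ℂ)^2‖ = k^2 := by
      rw [norm_neg, norm_pow, Complex.norm_real, Real.norm_eq_abs, sq_abs]
    have h2 : ‖3*Complex.I*(m:ℂ)*(k:ℂ)*((Real.tanh (m*y):ℝ):ℂ)‖ ≤ 3*(|m| * |k|) := by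
      have htb : |Real.tanh (m*y)| ≤ 1 := by
        nlinarith [tanh_sq_le_one (m*y), abs_nonneg (Real.tanh (m*y)),
          sq_abs (Real.tanh (m*y))]
      have he2 : ‖3*Complex.I*(m:ℂ)*(k:ℂ)*((Real.tanh (m*y):ℝ):ℂ)‖
          = |3*m*k*Real.tanh (m*y)| := by
        rw [show 3*Complex.I*(m:ℂ)*(k:ℂ)*((Real.tanh (m*y):ℝ):ℂ)
            = Complex.I * ((3*m*k*Real.tanh (m*y) : ℝ) : ℂ) by push_cast; ring,
          norm_mul, Complex.norm_I, one_mul, Complex.norm_real, Real.norm_eq_abs]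
      have he3 : |3*m*k*Real.tanh (m*y)| = 3*(|m| * |k|)*|Real.tanh (m*y)| := by
        rw [abs_mul, abs_mul, abs_mul, abs_of_nonneg (by norm_num : (0:ℝ) ≤ 3)]
        ring
      rw [he2, he3]
      nlinarith [abs_nonneg m, abs_nonneg k, mul_nonneg (abs_nonneg m) (abs_nonneg k)]
    have h3 : ‖2*(m:ℂ)^2‖ = 2*m^2 := by
      rw [show 2*(m:ℂ)^2 = ((2*m^2 : ℝ):ℂ) by push_cast; ring, Complex.norm_real,
        Real.norm_eq_abs, abs_of_nonneg (by positivity)]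
    have h4 : ‖3*(m:ℂ)^2*((sech (m*y):ℝ):ℂ)^2‖ ≤ 3*m^2 := by
      have hsb : sech (m*y)^2 ≤ 1 := by
        nlinarith [sech_sq_eq (m*y), sq_nonneg (Real.tanh (m*y))]
      have he4 : ‖3*(m:ℂ)^2*((sech (m*y):ℝ):ℂ)^2‖ = 3*m^2 * (sech (m*y))^2 := by
        rw [show 3*(m:ℂ)^2*((sech (m*y):ℝ):ℂ)^2 = ((3*m^2*(sech (m*y))^2 : ℝ):ℂ) by
            push_cast; ring, Complex.norm_real, Real.norm_eq_abs,
          abs_of_nonneg (by positivity)]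
      rw [he4]
      nlinarith [sq_nonneg m]
    calc ‖-(k:ℂ)^2 - 3*Complex.I*(m:ℂ)*(k:ℂ)*((Real.tanh (m*y):ℝ):ℂ) + 2*(m:ℂ)^2
          - 3*(m:ℂ)^2*((sech (m*y):ℝ):ℂ)^2‖
        ≤ ‖-(k:ℂ)^2 - 3*Complex.I*(m:ℂ)*(k:ℂ)*((Real.tanh (m*y):ℝ):ℂ) + 2*(m:ℂ)^2‖
          + ‖3*(m:ℂ)^2*((sech (m*y):ℝ):ℂ)^2‖ := norm_sub_le _ _
      _ ≤ (‖-(k:ℂ)^2 - 3*Complex.I*(m:ℂ)*(k:ℂ)*((Real.tanh (m*y):ℝ):ℂ)‖ + ‖2*(m:ℂ)^2‖)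
          + ‖3*(m:ℂ)^2*((sech (m*y):ℝ):ℂ)^2‖ := by gcongr; exact norm_add_le _ _
      _ ≤ ((‖-(k:ℂ)^2‖ + ‖3*Complex.I*(m:ℂ)*(k:ℂ)*((Real.tanh (m*y):ℝ):ℂ)‖) + ‖2*(m:ℂ)^2‖)
          + ‖3*(m:ℂ)^2*((sech (m*y):ℝ):ℂ)^2‖ := by gcongr; exact norm_sub_le _ _
      _ ≤ k^2 + 3*(|m| * |k|) + 2*m^2 + 3*m^2 := by
          rw [h1, h3]; linarith [h2, h4]
  have hint : Integrable f := by
    refine Integrable.mono' ((integrable_sech_sq hm).const_mul CE)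
      hcont.aestronglyMeasurable (Filter.Eventually.of_forall fun y => ?_)
    rw [hf]
    simp only []
    rw [norm_mul, norm_mul, norm_exp_I_mul_real, one_mul]
    have hs2 : ‖((sech (m*y):ℝ):ℂ)^2‖ = sech (m*y)^2 := by
      rw [norm_pow, Complex.norm_real, Real.norm_eq_abs, sq_abs]
    rw [hs2]
    calc sech (m*y)^2 * ‖genEig m k y‖ ≤ sech (m*y)^2 * CE := by
          refine mul_le_mul_of_nonneg_left (hEigB y) (by positivity)
      _ = CE * sech (m*y)^2 := mul_comm _ _
  refine ⟨hint, ?_⟩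
  have hsplit : ∫ y : ℝ, f y = (∫ y in Set.Iic x, f y) + (∫ y in Set.Ioi x, f y) :=
    (intervalIntegral.integral_Iic_add_Ioi hint.integrableOn hint.integrableOn).symm
  set CD : ℂ := cNorm m k / (((k:ℂ)^2 + (m:ℂ)^2) * ((k:ℂ)^2 + 4*(m:ℂ)^2)) with hCD
  rcases hk.lt_or_gt with hneg | hpos
  · -- k < 0
    have habs : |k| = -k := abs_of_neg hneg
    have hIic : ∫ y in Set.Iic x, f y
        = (CD * Complex.exp (-(Complex.I*(k:ℂ)*(x:ℂ)))) * Ffun m k x - 0 := by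
      refine integral_Iic_of_hasDerivAt_of_tendsto'
        (f := fun y => (CD * Complex.exp (-(Complex.I*(k:ℂ)*(x:ℂ)))) * Ffun m k y)
        (fun y hy => ?_) hint.integrableOn ?_
      · have h := (hasDerivAt_Ffun m k y).const_mul
          (CD * Complex.exp (-(Complex.I*(k:ℂ)*(x:ℂ))))
        refine h.congr_deriv ?_
        rw [hf]
        simp only []
        rw [habs, abs_of_nonneg (sub_nonneg.2 hy)]
        unfold genEig Pfun
        rw [sech_sq_eq' m y]
        rw [show Complex.I * ((-k:ℝ):ℂ) * ((x - y:ℝ):ℂ)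
            = Complex.I*(k:ℂ)*(y:ℂ) - Complex.I*(k:ℂ)*(x:ℂ) by push_cast; ring,
          Complex.exp_sub]
        rw [show 2*Complex.I*(k:ℂ)*(y:ℂ)
            = Complex.I*(k:ℂ)*(y:ℂ) + Complex.I*(k:ℂ)*(y:ℂ) by ring,
          Complex.exp_add, Complex.exp_neg, hCD]
        unfold tc
        field_simp
      · have := Filter.Tendsto.const_mul
          (CD * Complex.exp (-(Complex.I*(k:ℂ)*(x:ℂ)))) (tendsto_Ffun_atBot k hm)
        simpa using this
    have hIoi : ∫ y in Set.Ioi x, f y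
        = (CD * Complex.exp (Complex.I*(k:ℂ)*(x:ℂ))) * gpol m k 1
          - (CD * Complex.exp (Complex.I*(k:ℂ)*(x:ℂ))) * Gfun m k x := by
      refine integral_Ioi_of_hasDerivAt_of_tendsto'
        (f := fun y => (CD * Complex.exp (Complex.I*(k:ℂ)*(x:ℂ))) * Gfun m k y)
        (fun y hy => ?_) hint.integrableOn ?_
      · have h := (hasDerivAt_Gfun m k hm0 y).const_mul
          (CD * Complex.exp (Complex.I*(k:ℂ)*(x:ℂ)))
        refine h.congr_deriv ?_
        rw [hf]
        simp only []
        rw [habs, abs_sub_comm, abs_of_nonneg (sub_nonneg.2 hy)]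
        unfold genEig Pfun
        rw [sech_sq_eq' m y]
        rw [show Complex.I * ((-k:ℝ):ℂ) * ((y - x:ℝ):ℂ)
            = Complex.I*(k:ℂ)*(x:ℂ) - Complex.I*(k:ℂ)*(y:ℂ) by push_cast; ring,
          Complex.exp_sub, hCD]
        unfold tc
        field_simp [Complex.exp_ne_zero]
      · exact Filter.Tendsto.const_mul _ (tendsto_Gfun_atTop k hm)
    rw [hsplit, hIic, hIoi, habs]
    have hE0 : Complex.exp (Complex.I*(k:ℂ)*(x:ℂ)) ≠ 0 := Complex.exp_ne_zero _
    have hIval : CD * Complex.exp (-(Complex.I*(k:ℂ)*(x:ℂ))) * Ffun m k x - 0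
        + (CD * Complex.exp (Complex.I*(k:ℂ)*(x:ℂ)) * gpol m k 1
           - CD * Complex.exp (Complex.I*(k:ℂ)*(x:ℂ)) * Gfun m k x)
        = CD * Complex.exp (Complex.I*(k:ℂ)*(x:ℂ)) *
            ((-(k:ℂ)^2/(m:ℂ) - Complex.I*(k:ℂ)) + ((k:ℂ)^2/(m:ℂ)) * tc m x
              + Complex.I*(k:ℂ) * (tc m x * tc m x)) := by
      unfold Ffun Gfun gpol
      rw [Complex.exp_neg,
        show 2*Complex.I*(k:ℂ)*(x:ℂ) = Complex.I*(k:ℂ)*(x:ℂ) + Complex.I*(k:ℂ)*(x:ℂ) by ring,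
        Complex.exp_add]
      field_simp [hE0]
      ring
    rw [hIval]
    have htc : ((Real.tanh (m*x) : ℝ) : ℂ) = tc m x := rfl
    unfold genEig
    rw [sech_sq_eq' m x, htc, hCD, cNorm, if_neg (not_le.2 hneg)]
    push_cast
    have hX2 : -((k:ℂ) * (m:ℂ) ^ 9 * 16) + (-((k:ℂ) ^ 3 * (m:ℂ) ^ 7 * 40)
        - (k:ℂ) ^ 5 * (m:ℂ) ^ 5 * 33) + (-((k:ℂ) ^ 7 * (m:ℂ) ^ 3 * 10)
        - (k:ℂ) ^ 9 * (m:ℂ)) ≠ 0 := by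
      have heq2 : -((k:ℂ) * (m:ℂ) ^ 9 * 16) + (-((k:ℂ) ^ 3 * (m:ℂ) ^ 7 * 40)
          - (k:ℂ) ^ 5 * (m:ℂ) ^ 5 * 33) + (-((k:ℂ) ^ 7 * (m:ℂ) ^ 3 * 10)
          - (k:ℂ) ^ 9 * (m:ℂ))
          = -((k:ℂ) * (m:ℂ) * (((k:ℂ)^2 + (m:ℂ)^2) * ((k:ℂ)^2 + 4*(m:ℂ)^2))^2) := by ring
      rw [heq2, neg_ne_zero]
      exact mul_ne_zero (mul_ne_zero hkC hmC) (pow_ne_zero _ (mul_ne_zero hD1 hD2))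
    have hX3 : (k:ℂ) * (m:ℂ) ^ 9 * 16 + (k:ℂ) ^ 3 * (m:ℂ) ^ 7 * 40
        + (k:ℂ) ^ 5 * (m:ℂ) ^ 5 * 33 + (k:ℂ) ^ 7 * (m:ℂ) ^ 3 * 10
        + (k:ℂ) ^ 9 * (m:ℂ) ≠ 0 := by
      have heq3 : (k:ℂ) * (m:ℂ) ^ 9 * 16 + (k:ℂ) ^ 3 * (m:ℂ) ^ 7 * 40
          + (k:ℂ) ^ 5 * (m:ℂ) ^ 5 * 33 + (k:ℂ) ^ 7 * (m:ℂ) ^ 3 * 10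
          + (k:ℂ) ^ 9 * (m:ℂ)
          = (k:ℂ) * (m:ℂ) * (((k:ℂ)^2 + (m:ℂ)^2) * ((k:ℂ)^2 + 4*(m:ℂ)^2))^2 := by ring
      rw [heq3]
      exact mul_ne_zero (mul_ne_zero hkC hmC) (pow_ne_zero _ (mul_ne_zero hD1 hD2))
    field_simp [hmC, hkC, hD1, hD2, hE0, hX2]
    ring_nf
    simp only [I_sq', I_cube, I_four, I_five, I_six]
    ring_nf
    rw [inv_eq_one_div]
    field_simp [hX2, hX3, show (k:ℂ)^2 + (m:ℂ)^2*4 ≠ 0 by rw [mul_comm]; exact hD2]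
    ring
  · -- k > 0
    have habs : |k| = k := abs_of_pos hpos
    have hIic : ∫ y in Set.Iic x, f y
        = (CD * Complex.exp (Complex.I*(k:ℂ)*(x:ℂ))) * Gfun m k x
          - (CD * Complex.exp (Complex.I*(k:ℂ)*(x:ℂ))) * gpol m k (-1) := by
      refine integral_Iic_of_hasDerivAt_of_tendsto'
        (f := fun y => (CD * Complex.exp (Complex.I*(k:ℂ)*(x:ℂ))) * Gfun m k y)
        (fun y hy => ?_) hint.integrableOn ?_
      · have h := (hasDerivAt_Gfun m k hm0 y).const_mul
          (CD * Complex.exp (Complex.I*(k:ℂ)*(x:ℂ)))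
        refine h.congr_deriv ?_
        rw [hf]
        simp only []
        rw [habs, abs_of_nonneg (sub_nonneg.2 hy)]
        unfold genEig Pfun
        rw [sech_sq_eq' m y]
        rw [show Complex.I * ((k:ℝ):ℂ) * ((x - y:ℝ):ℂ)
            = Complex.I*(k:ℂ)*(x:ℂ) - Complex.I*(k:ℂ)*(y:ℂ) by push_cast; ring,
          Complex.exp_sub, hCD]
        unfold tc
        field_simp [Complex.exp_ne_zero]
      · exact Filter.Tendsto.const_mul _ (tendsto_Gfun_atBot k hm)
    have hIoi : ∫ y in Set.Ioi x, f y
        = 0 - (CD * Complex.exp (-(Complex.I*(k:ℂ)*(x:ℂ)))) * Ffun m k x := by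
      refine integral_Ioi_of_hasDerivAt_of_tendsto'
        (f := fun y => (CD * Complex.exp (-(Complex.I*(k:ℂ)*(x:ℂ)))) * Ffun m k y)
        (fun y hy => ?_) hint.integrableOn ?_
      · have h := (hasDerivAt_Ffun m k y).const_mul
          (CD * Complex.exp (-(Complex.I*(k:ℂ)*(x:ℂ))))
        refine h.congr_deriv ?_
        rw [hf]
        simp only []
        rw [habs, abs_sub_comm, abs_of_nonneg (sub_nonneg.2 hy)]
        unfold genEig Pfun
        rw [sech_sq_eq' m y]
        rw [show Complex.I * ((k:ℝ):ℂ) * ((y - x:ℝ):ℂ)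
            = Complex.I*(k:ℂ)*(y:ℂ) - Complex.I*(k:ℂ)*(x:ℂ) by push_cast; ring,
          Complex.exp_sub]
        rw [show 2*Complex.I*(k:ℂ)*(y:ℂ)
            = Complex.I*(k:ℂ)*(y:ℂ) + Complex.I*(k:ℂ)*(y:ℂ) by ring,
          Complex.exp_add, Complex.exp_neg, hCD]
        unfold tc
        field_simp
      · have := Filter.Tendsto.const_mul
          (CD * Complex.exp (-(Complex.I*(k:ℂ)*(x:ℂ)))) (tendsto_Ffun_atTop k hm)
        simpa using this
    rw [hsplit, hIic, hIoi, habs]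
    have hE0 : Complex.exp (Complex.I*(k:ℂ)*(x:ℂ)) ≠ 0 := Complex.exp_ne_zero _
    have hIval : CD * Complex.exp (Complex.I*(k:ℂ)*(x:ℂ)) * Gfun m k x
          - CD * Complex.exp (Complex.I*(k:ℂ)*(x:ℂ)) * gpol m k (-1)
        + (0 - CD * Complex.exp (-(Complex.I*(k:ℂ)*(x:ℂ))) * Ffun m k x)
        = CD * Complex.exp (Complex.I*(k:ℂ)*(x:ℂ)) *
            ((-(k:ℂ)^2/(m:ℂ) + Complex.I*(k:ℂ)) - ((k:ℂ)^2/(m:ℂ)) * tc m x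
              - Complex.I*(k:ℂ) * (tc m x * tc m x)) := by
      unfold Ffun Gfun gpol
      rw [Complex.exp_neg,
        show 2*Complex.I*(k:ℂ)*(x:ℂ) = Complex.I*(k:ℂ)*(x:ℂ) + Complex.I*(k:ℂ)*(x:ℂ) by ring,
        Complex.exp_add]
      field_simp [hE0]
      ring
    rw [hIval]
    have htc : ((Real.tanh (m*x) : ℝ) : ℂ) = tc m x := rfl
    unfold genEig
    rw [sech_sq_eq' m x, htc, hCD, cNorm, if_pos hpos.le]
    push_cast
    have hX2 : -((k:ℂ) * (m:ℂ) ^ 9 * 16) + (-((k:ℂ) ^ 3 * (m:ℂ) ^ 7 * 40)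
        - (k:ℂ) ^ 5 * (m:ℂ) ^ 5 * 33) + (-((k:ℂ) ^ 7 * (m:ℂ) ^ 3 * 10)
        - (k:ℂ) ^ 9 * (m:ℂ)) ≠ 0 := by
      have heq2 : -((k:ℂ) * (m:ℂ) ^ 9 * 16) + (-((k:ℂ) ^ 3 * (m:ℂ) ^ 7 * 40)
          - (k:ℂ) ^ 5 * (m:ℂ) ^ 5 * 33) + (-((k:ℂ) ^ 7 * (m:ℂ) ^ 3 * 10)
          - (k:ℂ) ^ 9 * (m:ℂ))
          = -((k:ℂ) * (m:ℂ) * (((k:ℂ)^2 + (m:ℂ)^2) * ((k:ℂ)^2 + 4*(m:ℂ)^2))^2) := by ring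
      rw [heq2, neg_ne_zero]
      exact mul_ne_zero (mul_ne_zero hkC hmC) (pow_ne_zero _ (mul_ne_zero hD1 hD2))
    have hX3 : (k:ℂ) * (m:ℂ) ^ 9 * 16 + (k:ℂ) ^ 3 * (m:ℂ) ^ 7 * 40
        + (k:ℂ) ^ 5 * (m:ℂ) ^ 5 * 33 + (k:ℂ) ^ 7 * (m:ℂ) ^ 3 * 10
        + (k:ℂ) ^ 9 * (m:ℂ) ≠ 0 := by
      have heq3 : (k:ℂ) * (m:ℂ) ^ 9 * 16 + (k:ℂ) ^ 3 * (m:ℂ) ^ 7 * 40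
          + (k:ℂ) ^ 5 * (m:ℂ) ^ 5 * 33 + (k:ℂ) ^ 7 * (m:ℂ) ^ 3 * 10
          + (k:ℂ) ^ 9 * (m:ℂ)
          = (k:ℂ) * (m:ℂ) * (((k:ℂ)^2 + (m:ℂ)^2) * ((k:ℂ)^2 + 4*(m:ℂ)^2))^2 := by ring
      rw [heq3]
      exact mul_ne_zero (mul_ne_zero hkC hmC) (pow_ne_zero _ (mul_ne_zero hD1 hD2))
    field_simp [hmC, hkC, hD1, hD2, hE0, hX2]
    ring_nf
    simp only [I_sq', I_cube, I_four, I_five, I_six]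
    ring_nf
    rw [inv_eq_one_div]
    field_simp [hX2, hX3, show (k:ℂ)^2 + (m:ℂ)^2*4 ≠ 0 by rw [mul_comm]; exact hD2]
    ring
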